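/- arXiv:1110.3714 — 2 statements merged into one kernel-verified Lean document; each statement's English description precedes it below -/
import Mathlib

section
/- Let u, v be solutions of ∂w/∂t = e^{-2w}·Δw on Ω × (0,T) as in the comparison principle, and for ε > 0 define v_ε(x,t) := v(x, ε^{-1}·ln(εt+1)) + (1/2)·ln(εt+1). Then v_ε is a strict supersolution: (∂_t v_ε - e^{-2v_ε}·Δv_ε)(x,t) = ε/(2(εt+1)) > 0 for all (x,t) ∈ Ω × (0,T). -/
/-! The time change `s = ε⁻¹ log(εt + 1)` has `ds/dt = 1/(εt + 1)`, while adding `½ log(εt + 1)`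
multiplies `e^{-2v}` by the same factor `1/(εt + 1)`; so the equation is reproduced exactly, up
to the extra term `d/dt (½ log(εt + 1)) = ε/(2(εt + 1))`. Since `log(1 + x) ≤ x`, the new time
stays in `(0, T)`. -/

/-- The Euclidean Laplacian of a function on `ℝ × ℝ`, expressed via iterated partial
derivatives in each coordinate. -/
noncomputable def lap2 (f : ℝ × ℝ → ℝ) (p : ℝ × ℝ) : ℝ :=
  deriv (fun x => deriv (fun x' => f (x', p.2)) x) p.1 +
  deriv (fun y => deriv (fun y' => f (p.1, y')) y) p.2

lemma lap2_add_const (f : ℝ × ℝ → ℝ) (c : ℝ) (p : ℝ × ℝ) :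
    lap2 (fun q => f q + c) p = lap2 f p := by
  simp only [lap2, deriv_add_const']

lemma mapsTo_inv_mul_log_mul_add_one {ε : ℝ} (hε : 0 < ε) (T : ℝ) :
    Set.MapsTo (fun t => ε⁻¹ * Real.log (ε * t + 1)) (Set.Ioo 0 T) (Set.Ioo 0 T) := by
  rintro t ⟨ht0, htT⟩
  have hpos : 0 < ε * t := mul_pos hε ht0
  refine ⟨mul_pos (inv_pos.2 hε) (Real.log_pos (by linarith)), lt_of_le_of_lt ?_ htT⟩
  rw [inv_mul_le_iff₀ hε]
  linarith [Real.log_le_sub_one_of_pos (by linarith : 0 < ε * t + 1)]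

lemma hasDerivAt_log_mul_add_one {ε t : ℝ} (ht : ε * t + 1 ≠ 0) :
    HasDerivAt (fun τ => Real.log (ε * τ + 1)) (ε / (ε * t + 1)) t := by
  simpa using (((hasDerivAt_id t).const_mul ε).add_const 1).log ht

lemma exp_neg_two_mul_add_half_log (a : ℝ) {x : ℝ} (hx : 0 < x) :
    Real.exp (-2 * (a + 1 / 2 * Real.log x)) = Real.exp (-2 * a) * x⁻¹ := by
  rw [show -2 * (a + 1 / 2 * Real.log x) = -2 * a + -Real.log x by ring,
    Real.exp_add, Real.exp_neg, Real.exp_log hx]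

theorem modified_strict_supersolution_general
    (Ω : Set (ℝ × ℝ)) (T : ℝ)
    (v : ℝ × ℝ → ℝ → ℝ)
    (hv_pde : ∀ p ∈ Ω, ∀ t ∈ Set.Ioo (0:ℝ) T,
      HasDerivAt (fun τ => v p τ)
        (Real.exp (-2 * v p t) * lap2 (fun q => v q t) p) t)
    (ε : ℝ) (hε : 0 < ε) :
    ∀ p ∈ Ω, ∀ t ∈ Set.Ioo (0:ℝ) T,
      HasDerivAt
        (fun τ => v p (ε⁻¹ * Real.log (ε*τ + 1)) + (1/2) * Real.log (ε*τ + 1))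
        (Real.exp (-2 * (v p (ε⁻¹ * Real.log (ε*t + 1)) + (1/2) * Real.log (ε*t + 1)))
            * lap2 (fun q => v q (ε⁻¹ * Real.log (ε*t + 1)) + (1/2) * Real.log (ε*t + 1)) p
          + ε / (2 * (ε*t + 1))) t := by
  intro p hp t ht
  have hpos : 0 < ε * t + 1 := by nlinarith [ht.1]
  have hlog := hasDerivAt_log_mul_add_one hpos.ne'
  have hcomp := (hv_pde p hp _ (mapsTo_inv_mul_log_mul_add_one hε T ht)).comp t
    (hlog.const_mul ε⁻¹)
  refine (hcomp.add (hlog.const_mul (1 / 2))).congr_deriv ?_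
  rw [lap2_add_const, exp_neg_two_mul_add_half_log _ hpos]
  field_simp

/-- Key computation in the comparison principle: if `v` solves
`∂v/∂t = e^{-2v}·Δv` on `Ω × (0,T)` (and is C² in space there), then for `ε > 0`
the modified function `v_ε(x,t) = v(x, ε⁻¹·log(εt+1)) + (1/2)·log(εt+1)` is a
strict supersolution: `∂_t v_ε - e^{-2 v_ε}·Δ v_ε = ε/(2(εt+1)) > 0` on
`Ω × (0,T)`. -/
theorem modified_strict_supersolution
    (Ω : Set (ℝ × ℝ)) (hΩopen : IsOpen Ω) (T : ℝ) (hT : 0 < T)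
    (v : ℝ × ℝ → ℝ → ℝ)
    (hv_space : ∀ t ∈ Set.Ioo (0:ℝ) T, ContDiffOn ℝ 2 (fun p => v p t) Ω)
    (hv_pde : ∀ p ∈ Ω, ∀ t ∈ Set.Ioo (0:ℝ) T,
      HasDerivAt (fun τ => v p τ)
        (Real.exp (-2 * v p t) * lap2 (fun q => v q t) p) t)
    (ε : ℝ) (hε : 0 < ε) :
    ∀ p ∈ Ω, ∀ t ∈ Set.Ioo (0:ℝ) T,
      HasDerivAt
        (fun τ => v p (ε⁻¹ * Real.log (ε*τ + 1)) + (1/2) * Real.log (ε*τ + 1))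
        (Real.exp (-2 * (v p (ε⁻¹ * Real.log (ε*t + 1)) + (1/2) * Real.log (ε*t + 1)))
            * lap2 (fun q => v q (ε⁻¹ * Real.log (ε*t + 1)) + (1/2) * Real.log (ε*t + 1)) p
          + ε / (2 * (ε*t + 1))) t :=
  modified_strict_supersolution_general Ω T v hv_pde ε hε
end

section
/- Suppose u : (0,k] × [0,1/100] → ℝ is continuous, C² in s and C¹ in t on the interior, solves ∂u/∂t = e^{-2u}·u_ss, satisfies u(s,t) ≥ -ln(sinh s) for all (s,t), u(s,0) = -ln s for s ∈ (0,k], and u(k,t) ≥ -ln k - (1/2)·ln 10 for t ∈ [0,1/100]. Then u(s,t) ≥ -ln s - (1/2)·ln 10 for all s ∈ (0,k] and t ∈ [0,1/100]. -/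
/-!
Shifting the singularity to `s = -δ` makes `l_δ(s) = -log (s + δ) - log 10 / 2` a smooth,
strictly convex barrier on the compact box `[δ, k] × [0, T]`, `T < 1/100`, lying below `u` on
its parabolic boundary: at `t = 0` because `log s ≤ log (s + δ)`, at `s = δ` because
`sinh δ ≤ 2δ`, at `s = k` by hypothesis. The minimum of `u - l_δ` over the box lies on that
boundary: elsewhere, minimality in `s` gives `u_ss ≥ l_δ'' > 0`, hence `u_t > 0` by the equation,
while minimality in `t` over `[0, t₀]` gives `u_t ≤ 0`. Let `δ → 0`, then `T → 1/100` by
continuity (the equation is not assumed at `t = 1/100`).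
-/

open Real Set Filter Topology

theorem IsLocalMin.deriv_deriv_nonneg {f : ℝ → ℝ} {x : ℝ} (h : IsLocalMin f x)
    (hc : ContinuousAt f x) : 0 ≤ deriv (deriv f) x := by
  by_contra! hneg
  have hmax : IsLocalMax f x := isLocalMax_of_deriv_deriv_neg hneg h.deriv_eq_zero hc
  have hconst : f =ᶠ[𝓝 x] fun _ => f x := by
    filter_upwards [h, hmax] with y hy₁ hy₂ using le_antisymm hy₂ hy₁
  have : deriv (deriv f) x = 0 := by
    rw [hconst.deriv.deriv_eq]
    simp
  linarith

theorem deriv_deriv_le_of_isLocalMin_sub {f g : ℝ → ℝ} {x : ℝ} (hf : ContDiffAt ℝ 2 f x)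
    (hg : ContDiffAt ℝ 2 g x) (h : IsLocalMin (f - g) x) :
    deriv (deriv g) x ≤ deriv (deriv f) x := by
  have := h.deriv_deriv_nonneg (hf.continuousAt.sub hg.continuousAt)
  have hsub := iteratedDeriv_sub (n := 2) hf hg
  simp only [iteratedDeriv_succ, iteratedDeriv_zero] at hsub
  linarith

theorem HasDerivAt.nonpos_of_isMinOn_Icc {f : ℝ → ℝ} {f' a b : ℝ} (hf : HasDerivAt f f' b)
    (hmin : IsMinOn f (Icc a b) b) (hab : a < b) : f' ≤ 0 := by
  have hcone : a - b ∈ posTangentConeAt (Icc a b) b :=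
    sub_mem_posTangentConeAt_of_segment_subset (by rw [segment_symm, segment_eq_Icc hab.le])
  have := hmin.localize.hasFDerivWithinAt_nonneg hf.hasFDerivAt.hasFDerivWithinAt hcone
  exact nonpos_of_mul_nonneg_right (by simpa using this) (sub_neg.2 hab)

theorem sinh_le_two_mul {x : ℝ} (h₀ : 0 ≤ x) (h₁ : x ≤ 1) : sinh x ≤ 2 * x := by
  have hexp : exp x - 1 ≤ 2 * x := by
    have := abs_exp_sub_one_le (x := x) (by rw [abs_of_nonneg h₀]; exact h₁)
    rw [abs_of_nonneg h₀] at this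
    exact (le_abs_self _).trans this
  have hexp_neg : 1 - x ≤ exp (-x) := by linarith [add_one_le_exp (-x)]
  rw [sinh_eq]
  linarith

theorem le_of_le_on_parabolic_boundary {u κ : ℝ → ℝ → ℝ} {φ : ℝ → ℝ} {a b T : ℝ}
    (hu : ContinuousOn (fun q : ℝ × ℝ => u q.1 q.2) (Icc a b ×ˢ Icc 0 T))
    (hu_space : ∀ t ∈ Ioc 0 T, ContDiffOn ℝ 2 (fun s => u s t) (Ioo a b))
    (hu_time : ∀ s ∈ Ioo a b, ∀ t ∈ Ioc 0 T,
      HasDerivAt (fun τ => u s τ) (κ s t * deriv (deriv fun σ => u σ t) s) t)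
    (hκ : ∀ s ∈ Ioo a b, ∀ t ∈ Ioc 0 T, 0 < κ s t)
    (hφ : ContDiffOn ℝ 2 φ (Icc a b)) (hφ'' : ∀ s ∈ Ioo a b, 0 < deriv (deriv φ) s)
    (h_bottom : ∀ s ∈ Icc a b, φ s ≤ u s 0) (h_left : ∀ t ∈ Icc 0 T, φ a ≤ u a t)
    (h_right : ∀ t ∈ Icc 0 T, φ b ≤ u b t) :
    ∀ s ∈ Icc a b, ∀ t ∈ Icc 0 T, φ s ≤ u s t := by
  intro s hs t ht
  obtain ⟨⟨s₀, t₀⟩, ⟨hs₀, ht₀⟩, hmin⟩ := (isCompact_Icc.prod isCompact_Icc).exists_isMinOn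
    ⟨_, mk_mem_prod hs ht⟩ (hu.sub (hφ.continuousOn.comp continuousOn_fst fun q hq => hq.1))
  replace hmin : ∀ σ ∈ Icc a b, ∀ τ ∈ Icc 0 T, u s₀ t₀ - φ s₀ ≤ u σ τ - φ σ :=
    fun σ hσ τ hτ => hmin (mk_mem_prod hσ hτ)
  dsimp only at hs₀ ht₀
  suffices h₀ : φ s₀ ≤ u s₀ t₀ by linarith [hmin s hs t ht]
  by_contra! hneg
  obtain rfl | ht₀_pos := ht₀.1.eq_or_lt
  · linarith [h_bottom s₀ hs₀]
  obtain rfl | hs₀_gt := hs₀.1.eq_or_lt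
  · linarith [h_left t₀ ht₀]
  obtain rfl | hs₀_lt := hs₀.2.eq_or_lt'
  · linarith [h_right t₀ ht₀]
  have hs₀_int : s₀ ∈ Ioo a b := ⟨hs₀_gt, hs₀_lt⟩
  have ht₀' : t₀ ∈ Ioc 0 T := ⟨ht₀_pos, ht₀.2⟩
  have hu_ss : deriv (deriv φ) s₀ ≤ deriv (deriv fun σ => u σ t₀) s₀ := by
    refine deriv_deriv_le_of_isLocalMin_sub ((hu_space t₀ ht₀').contDiffAt
      (isOpen_Ioo.mem_nhds hs₀_int)) (hφ.contDiffAt (Icc_mem_nhds hs₀_gt hs₀_lt)) ?_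
    filter_upwards [isOpen_Ioo.mem_nhds hs₀_int] with σ hσ
    exact hmin σ (Ioo_subset_Icc_self hσ) t₀ ht₀
  have hu_t : κ s₀ t₀ * deriv (deriv fun σ => u σ t₀) s₀ ≤ 0 :=
    ((hu_time s₀ hs₀_int t₀ ht₀').sub_const (φ s₀)).nonpos_of_isMinOn_Icc
      (fun τ hτ => hmin s₀ hs₀ τ ⟨hτ.1, hτ.2.trans ht₀.2⟩) ht₀_pos
  have := mul_pos (hκ s₀ hs₀_int t₀ ht₀') ((hφ'' s₀ hs₀_int).trans_le hu_ss)
  linarith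

noncomputable def logBarrier (δ s : ℝ) : ℝ := -log (s + δ) - 1 / 2 * log 10

theorem hasDerivAt_logBarrier {δ s : ℝ} (h : s + δ ≠ 0) :
    HasDerivAt (logBarrier δ) (-(s + δ)⁻¹) s := by
  show HasDerivAt (fun x => -log (x + δ) - 1 / 2 * log 10) _ s
  simpa using (((hasDerivAt_id s).add_const δ).log h).neg.sub_const (1 / 2 * log 10)

theorem deriv_deriv_logBarrier {δ s : ℝ} (h : 0 < s + δ) :
    deriv (deriv (logBarrier δ)) s = ((s + δ) ^ 2)⁻¹ := by
  have hderiv : deriv (logBarrier δ) =ᶠ[𝓝 s] fun x => -(x + δ)⁻¹ := by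
    filter_upwards [lt_mem_nhds (show -δ < s by linarith)] with x hx
    exact (hasDerivAt_logBarrier (by linarith)).deriv
  rw [hderiv.deriv_eq]
  have : HasDerivAt (fun x => -(x + δ)⁻¹) ((s + δ) ^ 2)⁻¹ s := by
    have := ((hasDerivAt_inv h.ne').comp_add_const s δ).neg
    rwa [neg_neg] at this
  exact this.deriv

theorem contDiffOn_logBarrier (δ : ℝ) : ContDiffOn ℝ 2 (logBarrier δ) (Ioi (-δ)) :=
  ((contDiffOn_id.add contDiffOn_const).log fun x (hx : -δ < x) =>
    (neg_lt_iff_pos_add.1 hx).ne').neg.sub contDiffOn_const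

theorem logBarrier_le_logBarrier_zero {δ s : ℝ} (hδ : 0 ≤ δ) (hs : 0 < s) :
    logBarrier δ s ≤ logBarrier 0 s := by
  have := log_le_log hs (le_add_of_nonneg_right hδ)
  simp only [logBarrier, add_zero]
  linarith

theorem logBarrier_zero (s : ℝ) : logBarrier 0 s = -log s - 1 / 2 * log 10 := by
  simp [logBarrier]

theorem logBarrier_self_le_neg_log_sinh {δ : ℝ} (h₀ : 0 < δ) (h₁ : δ ≤ 1) :
    logBarrier δ δ ≤ -log (sinh δ) := by
  have hlog : log (sinh δ) ≤ log (δ + δ) :=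
    log_le_log (sinh_pos_iff.2 h₀) (by linarith [sinh_le_two_mul h₀.le h₁])
  have := log_pos (by norm_num : (1 : ℝ) < 10)
  simp only [logBarrier]
  linarith

theorem continuousAt_logBarrier_left {s : ℝ} (hs : 0 < s) :
    ContinuousAt (fun δ => logBarrier δ s) 0 :=
  ((continuousAt_const.add continuousAt_id).log (by simpa using hs.ne')).neg.sub
    continuousAt_const

theorem logBarrier_le_of_pde {k T δ : ℝ} {u : ℝ → ℝ → ℝ} (hT : T < 1 / 100)
    (hδ₀ : 0 < δ) (hδ₁ : δ ≤ 1) (hδk : δ ≤ k)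
    (h_cont : ContinuousOn (fun q : ℝ × ℝ => u q.1 q.2) (Ioc 0 k ×ˢ Icc 0 (1 / 100)))
    (h_space : ∀ t ∈ Ioo (0 : ℝ) (1 / 100), ContDiffOn ℝ 2 (fun s => u s t) (Ioo 0 k))
    (h_pde : ∀ s ∈ Ioo 0 k, ∀ t ∈ Ioo (0 : ℝ) (1 / 100),
      HasDerivAt (fun τ => u s τ) (exp (-2 * u s t) * deriv (deriv fun σ => u σ t) s) t)
    (h_lower : ∀ s ∈ Ioc 0 k, ∀ t ∈ Icc (0 : ℝ) (1 / 100), -log (sinh s) ≤ u s t)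
    (h_init : ∀ s ∈ Ioc 0 k, u s 0 = -log s)
    (h_bdry : ∀ t ∈ Icc (0 : ℝ) (1 / 100), -log k - 1 / 2 * log 10 ≤ u k t) :
    ∀ s ∈ Icc δ k, ∀ t ∈ Icc 0 T, logBarrier δ s ≤ u s t := by
  have hT_sub : Ioc 0 T ⊆ Ioo 0 (1 / 100) := fun τ hτ => ⟨hτ.1, hτ.2.trans_lt hT⟩
  have hT_le : ∀ τ ∈ Icc 0 T, τ ∈ Icc (0 : ℝ) (1 / 100) := fun τ hτ => ⟨hτ.1, hτ.2.trans hT.le⟩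
  refine le_of_le_on_parabolic_boundary (κ := fun σ τ => exp (-2 * u σ τ))
    (h_cont.mono (prod_mono (Icc_subset_Ioc hδ₀ le_rfl) (Icc_subset_Icc_right hT.le)))
    (fun τ hτ => (h_space τ (hT_sub hτ)).mono (Ioo_subset_Ioo_left hδ₀.le))
    (fun σ hσ τ hτ => h_pde σ ⟨hδ₀.trans hσ.1, hσ.2⟩ τ (hT_sub hτ))
    (fun _ _ _ _ => exp_pos _)
    ((contDiffOn_logBarrier δ).mono fun σ hσ => by simp only [mem_Ioi]; linarith [hσ.1])
    (fun σ hσ => ?_) (fun σ hσ => ?_) (fun τ hτ => ?_) (fun τ hτ => ?_)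
  · have : 0 < σ + δ := by linarith [hσ.1]
    rw [deriv_deriv_logBarrier this]
    positivity
  · have hσ₀ : 0 < σ := hδ₀.trans_le hσ.1
    rw [h_init σ ⟨hσ₀, hσ.2⟩]
    have := log_pos (by norm_num : (1 : ℝ) < 10)
    linarith [logBarrier_le_logBarrier_zero hδ₀.le hσ₀, logBarrier_zero σ]
  · exact (logBarrier_self_le_neg_log_sinh hδ₀ hδ₁).trans (h_lower δ ⟨hδ₀, hδk⟩ τ (hT_le τ hτ))
  · refine (logBarrier_le_logBarrier_zero hδ₀.le (hδ₀.trans_le hδk)).trans ?_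
    rw [logBarrier_zero]
    exact h_bdry τ (hT_le τ hτ)

theorem one_dim_comparison_general (k : ℝ) (u : ℝ → ℝ → ℝ)
    (h_cont : ContinuousOn (fun q : ℝ × ℝ => u q.1 q.2)
      (Set.Ioc (0:ℝ) k ×ˢ Set.Icc (0:ℝ) (1/100)))
    (h_space : ∀ t ∈ Set.Ioo (0:ℝ) (1/100), ContDiffOn ℝ 2 (fun s => u s t)
      (Set.Ioo (0:ℝ) k))
    (h_pde : ∀ s ∈ Set.Ioo (0:ℝ) k, ∀ t ∈ Set.Ioo (0:ℝ) (1/100),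
      HasDerivAt (fun τ => u s τ)
        (Real.exp (-2 * u s t) * deriv (deriv (fun σ => u σ t)) s) t)
    (h_lower : ∀ s ∈ Set.Ioc (0:ℝ) k, ∀ t ∈ Set.Icc (0:ℝ) (1/100),
      u s t ≥ -Real.log (Real.sinh s))
    (h_init : ∀ s ∈ Set.Ioc (0:ℝ) k, u s 0 = -Real.log s)
    (h_bdry : ∀ t ∈ Set.Icc (0:ℝ) (1/100),
      u k t ≥ -Real.log k - (1/2) * Real.log 10) :
    ∀ s ∈ Set.Ioc (0:ℝ) k, ∀ t ∈ Set.Icc (0:ℝ) (1/100),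
      u s t ≥ -Real.log s - (1/2) * Real.log 10 := by
  intro s hs t ht
  have hs₁ : 0 < min s 1 := lt_min hs.1 one_pos
  have h_barrier : ∀ τ ∈ Ico 0 (1 / 100), ∀ δ ∈ Ioo 0 (min s 1), logBarrier δ s ≤ u s τ := by
    intro τ hτ δ ⟨hδ₀, hδ⟩
    have hδs : δ ≤ s := hδ.le.trans (min_le_left _ _)
    exact logBarrier_le_of_pde hτ.2 hδ₀ (hδ.le.trans (min_le_right _ _)) (hδs.trans hs.2)
      h_cont h_space h_pde h_lower h_init h_bdry s ⟨hδs, hs.2⟩ τ ⟨hτ.1, le_rfl⟩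
  have h_before_end : ∀ τ ∈ Ico 0 (1 / 100), logBarrier 0 s ≤ u s τ := fun τ hτ =>
    (continuousAt_logBarrier_left hs.1).continuousWithinAt.closure_le
      (by rw [closure_Ioo hs₁.ne]; exact left_mem_Icc.2 hs₁.le) continuousWithinAt_const
      (h_barrier τ hτ)
  have hu_s : ContinuousOn (fun τ => u s τ) (Icc 0 (1 / 100)) :=
    h_cont.comp (Continuous.prodMk_right s).continuousOn fun τ hτ => ⟨hs, hτ⟩
  rw [ge_iff_le, ← logBarrier_zero]
  exact continuousWithinAt_const.closure_le (by rwa [closure_Ico (by norm_num)])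
    ((hu_s t ht).mono Ico_subset_Icc_self) h_before_end

/-- One-dimensional comparison argument (from Lemma 2.6): if `u` is continuous on
`(0,k] × [0,1/100]`, C² in `s` and C¹ in `t` on the interior, solves
`∂u/∂t = e^{-2u}·u_ss`, satisfies `u(s,t) ≥ -log sinh s`, `u(s,0) = -log s` on
`(0,k]`, and `u(k,t) ≥ -log k - (1/2)·log 10` for `t ∈ [0,1/100]`, then
`u(s,t) ≥ -log s - (1/2)·log 10` for all `s ∈ (0,k]`, `t ∈ [0,1/100]`. -/
theorem one_dim_comparison (k : ℝ) (hk : 0 < k) (u : ℝ → ℝ → ℝ)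
    (h_cont : ContinuousOn (fun q : ℝ × ℝ => u q.1 q.2)
      (Set.Ioc (0:ℝ) k ×ˢ Set.Icc (0:ℝ) (1/100)))
    (h_space : ∀ t ∈ Set.Ioo (0:ℝ) (1/100), ContDiffOn ℝ 2 (fun s => u s t)
      (Set.Ioo (0:ℝ) k))
    (h_pde : ∀ s ∈ Set.Ioo (0:ℝ) k, ∀ t ∈ Set.Ioo (0:ℝ) (1/100),
      HasDerivAt (fun τ => u s τ)
        (Real.exp (-2 * u s t) * deriv (deriv (fun σ => u σ t)) s) t)
    (h_lower : ∀ s ∈ Set.Ioc (0:ℝ) k, ∀ t ∈ Set.Icc (0:ℝ) (1/100),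
      u s t ≥ -Real.log (Real.sinh s))
    (h_init : ∀ s ∈ Set.Ioc (0:ℝ) k, u s 0 = -Real.log s)
    (h_bdry : ∀ t ∈ Set.Icc (0:ℝ) (1/100),
      u k t ≥ -Real.log k - (1/2) * Real.log 10) :
    ∀ s ∈ Set.Ioc (0:ℝ) k, ∀ t ∈ Set.Icc (0:ℝ) (1/100),
      u s t ≥ -Real.log s - (1/2) * Real.log 10 :=
  one_dim_comparison_general k u h_cont h_space h_pde h_lower h_init h_bdry
end
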